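/- arXiv:0707.3375 — 5 statements merged into one kernel-verified Lean document; each statement's English description precedes it below -/
import Mathlib

section
/- The alternating group A5 is isomorphic to PSL(2,5), the projective special linear group of degree 2 over the field with 5 elements. -/
/-!
`PSL(2,5)` is simple (as is every `PSL(2,F)` with `|F| ≥ 4`), of order
`120 / 2 = 60`. In `SL(2,5)` the monomial matrices form a quaternion group `Q₈`, whose normalizer
(`≅ SL(2,3)`, of order 24) contains the centre, so `PSL(2,5)` has a subgroup of index 5.
A simple group `G` acting on the cosets of a subgroup of index `n` embeds into `Sₙ`; when
`|G| = n!/2` the image has index 2, hence is `Aₙ`.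
-/

open Matrix Subgroup Nat

theorem IsSimpleGroup.normalCore_eq_bot {G : Type*} [Group G] [IsSimpleGroup G] {H : Subgroup G}
    (hH : H ≠ ⊤) : H.normalCore = ⊥ :=
  (IsSimpleGroup.eq_bot_or_eq_top_of_normal _ H.normalCore_normal).resolve_right
    fun h ↦ hH (top_le_iff.mp (h ▸ H.normalCore_le))

theorem IsSimpleGroup.nonempty_alternatingGroup_mulEquiv {G : Type*} [Group G] [IsSimpleGroup G]
    [Finite G] {H : Subgroup G} {n : ℕ} (hn : H.index = n) (hG : 2 * Nat.card G = n !) :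
    Nonempty (alternatingGroup (Fin n) ≃* G) := by
  classical
  have : Fintype (G ⧸ H) := Fintype.ofFinite _
  set ρ := MulAction.toPermHom G (G ⧸ H)
  have hH : H ≠ ⊤ := by
    rintro rfl
    rw [index_top] at hn
    subst hn
    simp at hG
  have hρ : Function.Injective ρ := by
    rw [← MonoidHom.ker_eq_bot_iff, ← normalCore_eq_ker]
    exact IsSimpleGroup.normalCore_eq_bot hH
  have hrange : ρ.range = alternatingGroup (G ⧸ H) := by
    refine Equiv.Perm.eq_alternatingGroup_of_index_eq_two ?_
    have hcard := ρ.range.card_mul_index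
    rw [Nat.card_perm, ← index, hn, ← Nat.card_congr (MonoidHom.ofInjective hρ).toEquiv] at hcard
    exact Nat.eq_of_mul_eq_mul_left Nat.card_pos (by rw [hcard, ← hG, mul_comm])
  have e : G ⧸ H ≃ Fin n := (Finite.equivFin _).trans (finCongr hn)
  exact ⟨(Equiv.altCongrHom e.symm).trans
    ((MulEquiv.subgroupCongr hrange.symm).trans (MonoidHom.ofInjective hρ).symm)⟩

instance Subgroup.decidableMemNormalizerOfFintype {G : Type*} [Group G] [Fintype G]
    [DecidableEq G] (H : Subgroup G) [DecidablePred (· ∈ H)] :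
    DecidablePred (· ∈ normalizer (H : Set G)) :=
  fun g ↦ decidable_of_iff (∀ h ∈ H, g * h * g⁻¹ ∈ H)
    ⟨mem_normalizer_fintype, fun hg h hh ↦ (hg h).mp hh⟩

namespace Matrix.SpecialLinearGroup

theorem card_center_fin_two {F : Type*} [Field F] (hF : ringChar F ≠ 2) :
    Nat.card (center (SpecialLinearGroup (Fin 2) F)) = 2 := by
  rw [Nat.card_congr (center_equiv_rootsOfUnity' 0).toEquiv, Fintype.card_fin]
  exact (IsPrimitiveRoot.neg_one (ringChar F) hF).card_rootsOfUnity

variable (R : Type*) [CommRing R]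

def monomial : Subgroup (SpecialLinearGroup (Fin 2) R) where
  carrier := {A | A 0 1 = 0 ∧ A 1 0 = 0 ∨ A 0 0 = 0 ∧ A 1 1 = 0}
  one_mem' := by simp
  mul_mem' := by
    rintro A B (⟨hA₁, hA₂⟩ | ⟨hA₁, hA₂⟩) (⟨hB₁, hB₂⟩ | ⟨hB₁, hB₂⟩) <;>
      simp [coe_mul, Matrix.mul_apply, Fin.sum_univ_two, *]
  inv_mem' {A} hA := by
    rw [SL2_inv_expl]
    rcases hA with ⟨h₁, h₂⟩ | ⟨h₁, h₂⟩
    · exact Or.inl ⟨by simp [h₁], by simp [h₂]⟩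
    · exact Or.inr ⟨by simp [h₂], by simp [h₁]⟩

instance [DecidableEq R] : DecidablePred (· ∈ monomial R) := fun A ↦
  inferInstanceAs (Decidable (A 0 1 = 0 ∧ A 1 0 = 0 ∨ A 0 0 = 0 ∧ A 1 1 = 0))

set_option maxRecDepth 10000 in
theorem card_fin_two_zmod_five : Nat.card (SpecialLinearGroup (Fin 2) (ZMod 5)) = 120 := by
  rw [Nat.card_eq_fintype_card]
  decide

set_option maxRecDepth 10000 in
theorem card_normalizer_monomial_zmod_five :
    Nat.card (normalizer (monomial (ZMod 5) : Set (SpecialLinearGroup (Fin 2) (ZMod 5)))) = 24 := by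
  rw [Nat.card_eq_fintype_card]
  decide

end Matrix.SpecialLinearGroup

open Matrix.SpecialLinearGroup

/-- The alternating group `A₅` is isomorphic to `PSL(2,5)`,
the quotient of `SL(2, ZMod 5)` by its center. -/
theorem a5_iso_psl25 :
    Nonempty (alternatingGroup (Fin 5) ≃*
      (Matrix.SpecialLinearGroup (Fin 2) (ZMod 5) ⧸
        Subgroup.center (Matrix.SpecialLinearGroup (Fin 2) (ZMod 5)))) := by
  have : Fact (Nat.Prime 5) := ⟨by norm_num⟩
  set SL := SpecialLinearGroup (Fin 2) (ZMod 5)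
  set N := normalizer (monomial (ZMod 5) : Set SL)
  have : IsSimpleGroup (SL ⧸ center SL) :=
    ProjectiveSpecialLinearGroup.rank_two_simple (by rw [Nat.card_zmod]; decide)
  have hPSL : Nat.card (SL ⧸ center SL) = 60 := by
    have := card_eq_card_quotient_mul_card_subgroup (center SL)
    rw [card_fin_two_zmod_five, card_center_fin_two (by rw [ZMod.ringChar_zmod_n]; decide)] at this
    omega
  have hN : N.index = 5 := by
    have := N.index_mul_card
    rw [card_fin_two_zmod_five, card_normalizer_monomial_zmod_five] at this
    omega
  have hindex : (N.map (QuotientGroup.mk' (center SL))).index = 5 := by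
    rw [index_map_eq _ (QuotientGroup.mk'_surjective _)
      (by rw [QuotientGroup.ker_mk']; exact center_le_normalizer _), hN]
  exact IsSimpleGroup.nonempty_alternatingGroup_mulEquiv hindex (by rw [hPSL]; decide)
end

section
/- The group with presentation ⟨a, b, c | a² = b³ = c⁵ = abc = 1⟩ (the (2,3,5) triangle group) is isomorphic to the alternating group A5. -/
/-!
Eliminating `b = (c a)⁻¹` leaves the relations `a² = c⁵ = (c a)³ = 1`. Read `c` as the rotation
about a vertex `x` of the icosahedron and `a` as the half-turn about an edge at `x`: the vertex
`x`, its five neighbours `cⁱ a x`, the five vertices `cⁱ a c² a x` of the next ring and the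
antipode `a c³ a c² a x` form a set closed under `a` and `c`. This uses only the relations, so
it holds in the coset space `Δ ⧸ ⟨c⟩` of the triangle group `Δ`, where it forces
`[Δ : ⟨c⟩] ≤ 12` and `|Δ| ≤ 60`. Sending `a ↦ (0 1)(2 3)`, `b ↦ (1 2 4)` defines a homomorphism
to `A₅` whose image has order divisible by `30`, hence index at most 2; as `A₅` is simple it is
onto, and so an isomorphism.
-/

open FreeGroup

/-- The relations of the (2,3,5) triangle group presentation
`⟨a, b, c | a² = b³ = c⁵ = abc = 1⟩` on three generators. -/
def triangle235Rels : Set (FreeGroup (Fin 3)) :=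
  {(of 0) ^ 2, (of 1) ^ 3, (of 2) ^ 5, of 0 * of 1 * of 2}

theorem mul_eq_inv_of_mul_mul_eq_one {G : Type*} [Group G] {a b c : G} (h : a * b * c = 1) :
    c * a = b⁻¹ :=
  eq_inv_of_mul_eq_one_left ((mul_assoc c a b).trans (mul_eq_one_comm.1 h))

theorem pow_smul_eq_self_of_smul_eq_self {M X : Type*} [Monoid M] [MulAction M X] {c : M}
    {x : X} (hx : c • x = x) (n : ℕ) : c ^ n • x = x := by
  rw [← smul_iterate_apply]
  exact Function.IsFixedPt.iterate hx n

theorem Set.ncard_range_le {α ι : Type*} [Finite ι] (f : ι → α) :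
    (Set.range f).ncard ≤ Nat.card ι := by
  rw [← Set.image_univ, ← Set.ncard_univ]
  exact Set.ncard_image_le

open Pointwise in
theorem MulAction.orbit_subset_of_smul_mem {G X : Type*} [Group G] [MulAction G X] {s : Set G}
    (hs : Subgroup.closure s = ⊤) {Q : Set X} (hQ : Q.Finite)
    (hsQ : ∀ g ∈ s, ∀ y ∈ Q, g • y ∈ Q) {x : X} (hx : x ∈ Q) : MulAction.orbit G x ⊆ Q := by
  have hstab : Subgroup.closure s ≤ MulAction.stabilizer G Q := by
    refine (Subgroup.closure_le _).2 fun g hg => ?_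
    have hsub : g • Q ⊆ Q := Set.smul_set_subset_iff.2 (hsQ g hg)
    exact MulAction.mem_stabilizer_iff.2
      (Set.eq_of_subset_of_ncard_le hsub (Set.ncard_smul_set g Q).ge hQ)
  rintro _ ⟨g, rfl⟩
  have hg : g • Q = Q := MulAction.mem_stabilizer_iff.1 (hstab (hs ▸ Subgroup.mem_top g))
  exact hg ▸ Set.smul_mem_smul_set hx

theorem Subgroup.eq_top_of_index_dvd_two {G : Type*} [Group G] [IsSimpleGroup G]
    {K : Subgroup G} (hK : K ≠ ⊥) (h2 : K.index ∣ 2) : K = ⊤ := by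
  rcases (Nat.dvd_prime Nat.prime_two).1 h2 with h1 | h2
  · exact Subgroup.index_eq_one.1 h1
  · have := Subgroup.normal_of_index_eq_two h2
    exact (IsSimpleGroup.eq_bot_or_eq_top_of_normal K this).resolve_left hK

/-- The (2,3,5) triangle relations in the generators `a` and `c`, with `b = (c * a)⁻¹`
eliminated. -/
structure IcosahedralRelations {G : Type*} [Group G] (a c : G) : Prop where
  sq_a : a ^ 2 = 1
  pow_five_c : c ^ 5 = 1
  pow_three_mul : (c * a) ^ 3 = 1

namespace IcosahedralRelations

variable {G : Type*} [Group G] {a c : G}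

theorem of_triangle {b : G} (ha : a ^ 2 = 1) (hb : b ^ 3 = 1) (hc : c ^ 5 = 1)
    (habc : a * b * c = 1) : IcosahedralRelations a c where
  sq_a := ha
  pow_five_c := hc
  pow_three_mul := by rw [mul_eq_inv_of_mul_mul_eq_one habc, inv_pow, hb, inv_one]

theorem inv_a (h : IcosahedralRelations a c) : a⁻¹ = a :=
  inv_eq_of_mul_eq_one_right (by rw [← sq, h.sq_a])

theorem inv_c (h : IcosahedralRelations a c) : c⁻¹ = c ^ 4 :=
  inv_eq_of_mul_eq_one_right (by rw [← pow_succ', h.pow_five_c])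

theorem a_mul_c_mul_a (h : IcosahedralRelations a c) : a * c * a = c ^ 4 * a * c ^ 4 := by
  calc a * c * a = c⁻¹ * (c * a) ^ 3 * a⁻¹ * c⁻¹ := by
        simp only [pow_succ, pow_zero, one_mul]
        group
    _ = c ^ 4 * a * c ^ 4 := by rw [h.pow_three_mul, h.inv_a, h.inv_c, mul_one]

theorem a_mul_c4_mul_a (h : IcosahedralRelations a c) : a * c ^ 4 * a = c * a * c := by
  have hc : (c ^ 4)⁻¹ = c := by rw [← h.inv_c, inv_inv]
  rw [← h.inv_c]
  simpa only [mul_inv_rev, h.inv_a, hc, ← mul_assoc] using congrArg (·⁻¹) h.a_mul_c_mul_a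

/-! In the action lemmas `c` is written `c ^ 1`, so that they can be chained by `simp` with
`pow_smul_pow_smul`, which merges powers of `c` modulo 5. -/

variable {X : Type*} [MulAction G X]

theorem a_smul_a_smul (h : IcosahedralRelations a c) (y : X) : a • a • y = y := by
  rw [smul_smul, ← sq, h.sq_a, one_smul]

theorem pow_smul_pow_smul (h : IcosahedralRelations a c) (m n : ℕ) (y : X) :
    c ^ m • c ^ n • y = c ^ ((m + n) % 5) • y := by
  rw [smul_smul, ← pow_add, ← pow_eq_pow_mod _ h.pow_five_c]

theorem a_smul_c_smul_a_smul (h : IcosahedralRelations a c) (y : X) :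
    a • c ^ 1 • a • y = c ^ 4 • a • c ^ 4 • y := by
  simp only [smul_smul, pow_one, ← mul_assoc, h.a_mul_c_mul_a]

theorem a_smul_c4_smul_a_smul (h : IcosahedralRelations a c) (y : X) :
    a • c ^ 4 • a • y = c ^ 1 • a • c ^ 1 • y := by
  simp only [smul_smul, pow_one, ← mul_assoc, h.a_mul_c4_mul_a]

theorem c_smul_a_smul (h : IcosahedralRelations a c) (y : X) :
    c ^ 1 • a • y = a • c ^ 4 • a • c ^ 4 • y := by
  rw [← h.a_smul_c_smul_a_smul, h.a_smul_a_smul]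

variable {x : X}

theorem a_smul_c3_smul_a_smul (h : IcosahedralRelations a c) (hx : c • x = x) :
    a • c ^ 3 • a • x = c ^ 1 • a • c ^ 2 • a • x := by
  calc a • c ^ 3 • a • x = a • c ^ 4 • a • (a • c ^ 4 • a • x) := by
        rw [h.a_smul_a_smul, h.pow_smul_pow_smul]
    _ = c ^ 1 • a • c ^ 2 • a • x := by
        simp only [h.a_smul_c4_smul_a_smul, h.pow_smul_pow_smul,
          pow_smul_eq_self_of_smul_eq_self hx]

theorem a_smul_c2_smul_a_smul_c2_smul_a_smul (h : IcosahedralRelations a c) (hx : c • x = x) :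
    a • c ^ 2 • a • c ^ 2 • a • x = c ^ 4 • a • c ^ 2 • a • x := by
  calc a • c ^ 2 • a • c ^ 2 • a • x = a • c ^ 1 • a • (a • c ^ 1 • a • c ^ 2 • a • x) := by
        rw [h.a_smul_a_smul, h.pow_smul_pow_smul]
    _ = c ^ 4 • a • c ^ 2 • a • x := by
        simp only [h.a_smul_c_smul_a_smul, h.pow_smul_pow_smul,
          pow_smul_eq_self_of_smul_eq_self hx]

theorem c_smul_a_smul_c3_smul_a_smul_c2_smul_a_smul (h : IcosahedralRelations a c)
    (hx : c • x = x) : c • a • c ^ 3 • a • c ^ 2 • a • x = a • c ^ 3 • a • c ^ 2 • a • x := by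
  calc c • a • c ^ 3 • a • c ^ 2 • a • x = c ^ 1 • a • c ^ 3 • a • c ^ 2 • a • x := by
        rw [pow_one]
    _ = a • c ^ 3 • a • c ^ 2 • a • x := by
        simp only [h.c_smul_a_smul, h.pow_smul_pow_smul,
          h.a_smul_c2_smul_a_smul_c2_smul_a_smul hx]

theorem a_smul_c_smul_a_smul_c2_smul_a_smul (h : IcosahedralRelations a c) (hx : c • x = x) :
    a • c ^ 1 • a • c ^ 2 • a • x = c ^ 3 • a • x := by
  simp only [h.a_smul_c_smul_a_smul, h.pow_smul_pow_smul, pow_smul_eq_self_of_smul_eq_self hx]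

theorem a_smul_c4_smul_a_smul_c2_smul_a_smul (h : IcosahedralRelations a c) (hx : c • x = x) :
    a • c ^ 4 • a • c ^ 2 • a • x = c ^ 2 • a • c ^ 2 • a • x := by
  simp only [h.a_smul_c4_smul_a_smul, h.pow_smul_pow_smul, h.a_smul_c3_smul_a_smul hx]

end IcosahedralRelations

/-- The twelve vertices of the icosahedron, when `c` is the rotation about the vertex `x` and `a`
the half-turn about an edge at `x`. -/
def icosahedronVertices {G X : Type*} [Group G] [MulAction G X] (a c : G) (x : X) : Set X :=
  ({x, a • c ^ 3 • a • c ^ 2 • a • x} ∪ Set.range fun i : Fin 5 => c ^ (i : ℕ) • a • x) ∪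
    Set.range fun i : Fin 5 => c ^ (i : ℕ) • a • c ^ 2 • a • x

section icosahedronVertices

variable {G X : Type*} [Group G] [MulAction G X] {a c : G} {x : X}

theorem finite_icosahedronVertices : (icosahedronVertices a c x).Finite := by
  unfold icosahedronVertices
  exact Set.toFinite _

theorem ncard_icosahedronVertices_le : (icosahedronVertices a c x).ncard ≤ 12 := by
  have hpair : ({x, a • c ^ 3 • a • c ^ 2 • a • x} : Set X).ncard ≤ 2 :=
    (Set.ncard_insert_le _ _).trans (by rw [Set.ncard_singleton])
  have hnear := Set.ncard_range_le fun i : Fin 5 => c ^ (i : ℕ) • a • x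
  have hfar := Set.ncard_range_le fun i : Fin 5 => c ^ (i : ℕ) • a • c ^ 2 • a • x
  rw [Nat.card_fin] at hnear hfar
  exact (Set.ncard_union_le _ _).trans (by grw [Set.ncard_union_le, hpair, hnear, hfar])

theorem self_mem_icosahedronVertices : x ∈ icosahedronVertices a c x := by
  simp [icosahedronVertices]

theorem a_smul_c3_smul_a_smul_c2_smul_a_smul_mem_icosahedronVertices :
    a • c ^ 3 • a • c ^ 2 • a • x ∈ icosahedronVertices a c x := by
  simp [icosahedronVertices]

end icosahedronVertices

namespace IcosahedralRelations

variable {G X : Type*} [Group G] [MulAction G X] {a c : G} {x : X}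

theorem pow_smul_a_smul_mem_icosahedronVertices (h : IcosahedralRelations a c) (n : ℕ) :
    c ^ n • a • x ∈ icosahedronVertices a c x :=
  .inl <| .inr ⟨⟨n % 5, Nat.mod_lt _ (by norm_num)⟩, by
    dsimp only
    rw [← pow_eq_pow_mod n h.pow_five_c]⟩

theorem pow_smul_a_smul_c2_smul_a_smul_mem_icosahedronVertices (h : IcosahedralRelations a c)
    (n : ℕ) : c ^ n • a • c ^ 2 • a • x ∈ icosahedronVertices a c x :=
  .inr ⟨⟨n % 5, Nat.mod_lt _ (by norm_num)⟩, by
    dsimp only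
    rw [← pow_eq_pow_mod n h.pow_five_c]⟩

theorem a_smul_pow_smul_a_smul_mem_icosahedronVertices (h : IcosahedralRelations a c)
    (hx : c • x = x) {n : ℕ} (hn : n < 5) : a • c ^ n • a • x ∈ icosahedronVertices a c x := by
  interval_cases n
  · rw [pow_zero, one_smul, h.a_smul_a_smul]
    exact self_mem_icosahedronVertices
  · rw [h.a_smul_c_smul_a_smul, pow_smul_eq_self_of_smul_eq_self hx]
    exact h.pow_smul_a_smul_mem_icosahedronVertices 4
  · simpa only [pow_zero, one_smul] using
      h.pow_smul_a_smul_c2_smul_a_smul_mem_icosahedronVertices 0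
  · rw [h.a_smul_c3_smul_a_smul hx]
    exact h.pow_smul_a_smul_c2_smul_a_smul_mem_icosahedronVertices 1
  · rw [h.a_smul_c4_smul_a_smul, pow_smul_eq_self_of_smul_eq_self hx]
    exact h.pow_smul_a_smul_mem_icosahedronVertices 1

theorem a_smul_pow_smul_a_smul_c2_smul_a_smul_mem_icosahedronVertices
    (h : IcosahedralRelations a c) (hx : c • x = x) {n : ℕ} (hn : n < 5) :
    a • c ^ n • a • c ^ 2 • a • x ∈ icosahedronVertices a c x := by
  interval_cases n
  · rw [pow_zero, one_smul, h.a_smul_a_smul]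
    exact h.pow_smul_a_smul_mem_icosahedronVertices 2
  · rw [h.a_smul_c_smul_a_smul_c2_smul_a_smul hx]
    exact h.pow_smul_a_smul_mem_icosahedronVertices 3
  · rw [h.a_smul_c2_smul_a_smul_c2_smul_a_smul hx]
    exact h.pow_smul_a_smul_c2_smul_a_smul_mem_icosahedronVertices 4
  · exact a_smul_c3_smul_a_smul_c2_smul_a_smul_mem_icosahedronVertices
  · rw [h.a_smul_c4_smul_a_smul_c2_smul_a_smul hx]
    exact h.pow_smul_a_smul_c2_smul_a_smul_mem_icosahedronVertices 2

theorem a_smul_mem_icosahedronVertices (h : IcosahedralRelations a c) (hx : c • x = x) {y : X}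
    (hy : y ∈ icosahedronVertices a c x) : a • y ∈ icosahedronVertices a c x := by
  simp only [icosahedronVertices, Set.mem_union, Set.mem_insert_iff, Set.mem_singleton_iff,
    Set.mem_range] at hy
  rcases hy with ((rfl | rfl) | ⟨i, rfl⟩) | ⟨i, rfl⟩
  · simpa only [pow_zero, one_smul] using h.pow_smul_a_smul_mem_icosahedronVertices 0
  · rw [h.a_smul_a_smul]
    exact h.pow_smul_a_smul_c2_smul_a_smul_mem_icosahedronVertices 3
  · exact h.a_smul_pow_smul_a_smul_mem_icosahedronVertices hx i.isLt
  · exact h.a_smul_pow_smul_a_smul_c2_smul_a_smul_mem_icosahedronVertices hx i.isLt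

theorem c_smul_mem_icosahedronVertices (h : IcosahedralRelations a c) (hx : c • x = x) {y : X}
    (hy : y ∈ icosahedronVertices a c x) : c • y ∈ icosahedronVertices a c x := by
  simp only [icosahedronVertices, Set.mem_union, Set.mem_insert_iff, Set.mem_singleton_iff,
    Set.mem_range] at hy
  rcases hy with ((rfl | rfl) | ⟨i, rfl⟩) | ⟨i, rfl⟩
  · rw [hx]
    exact self_mem_icosahedronVertices
  · rw [h.c_smul_a_smul_c3_smul_a_smul_c2_smul_a_smul hx]
    exact a_smul_c3_smul_a_smul_c2_smul_a_smul_mem_icosahedronVertices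
  · rw [smul_smul, ← pow_succ']
    exact h.pow_smul_a_smul_mem_icosahedronVertices _
  · rw [smul_smul, ← pow_succ']
    exact h.pow_smul_a_smul_c2_smul_a_smul_mem_icosahedronVertices _

open Subgroup

theorem icosahedronVertices_eq_univ (h : IcosahedralRelations a c)
    (hgen : closure {a, c} = ⊤) :
    icosahedronVertices a c ((1 : G) : G ⧸ zpowers c) = Set.univ := by
  have hx : c • ((1 : G) : G ⧸ zpowers c) = (1 : G) := by
    rw [MulAction.Quotient.smul_coe, smul_eq_mul, mul_one, QuotientGroup.eq, mul_one]
    exact inv_mem (mem_zpowers c)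
  refine Set.eq_univ_of_univ_subset ?_
  rw [← MulAction.orbit_eq_univ G ((1 : G) : G ⧸ zpowers c)]
  refine MulAction.orbit_subset_of_smul_mem hgen finite_icosahedronVertices ?_
    self_mem_icosahedronVertices
  rintro g (rfl | hg) y hy
  · exact h.a_smul_mem_icosahedronVertices hx hy
  · rw [Set.mem_singleton_iff.1 hg]
    exact h.c_smul_mem_icosahedronVertices hx hy

theorem index_zpowers_le (h : IcosahedralRelations a c) (hgen : closure {a, c} = ⊤) :
    (zpowers c).index ≤ 12 := by
  rw [index, ← Set.ncard_univ, ← h.icosahedronVertices_eq_univ hgen]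
  exact ncard_icosahedronVertices_le

theorem finite (h : IcosahedralRelations a c) (hgen : closure {a, c} = ⊤) : Finite G := by
  have : Finite (G ⧸ zpowers c) := by
    rw [← Set.finite_univ_iff, ← h.icosahedronVertices_eq_univ hgen]
    exact finite_icosahedronVertices
  refine Nat.finite_of_card_ne_zero ?_
  rw [← (zpowers c).card_mul_index, Nat.card_zpowers]
  exact mul_ne_zero (isOfFinOrder_iff_pow_eq_one.2 ⟨5, by norm_num, h.pow_five_c⟩).orderOf_pos.ne'
    index_ne_zero_of_finite

theorem card_le_sixty (h : IcosahedralRelations a c) (hgen : closure {a, c} = ⊤) :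
    Nat.card G ≤ 60 := by
  rw [← (zpowers c).card_mul_index, Nat.card_zpowers]
  exact Nat.mul_le_mul (orderOf_le_of_pow_eq_one (by norm_num) h.pow_five_c)
    (h.index_zpowers_le hgen)

end IcosahedralRelations

theorem alternatingGroup.nat_card_five : Nat.card (alternatingGroup (Fin 5)) = 60 := by
  rw [nat_card_alternatingGroup, Nat.card_fin]
  rfl

theorem alternatingGroup.eq_top_of_thirty_dvd_natCard {K : Subgroup (alternatingGroup (Fin 5))}
    (hK : 30 ∣ Nat.card K) : K = ⊤ := by
  obtain ⟨k, hk⟩ := hK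
  have hmul : 30 * (K.index * k) = 30 * 2 := by
    have := K.card_mul_index
    rw [hk, nat_card_five] at this
    linarith
  refine Subgroup.eq_top_of_index_dvd_two (fun hbot => ?_)
    ⟨k, (Nat.eq_of_mul_eq_mul_left (by norm_num) hmul).symm⟩
  rw [hbot, Subgroup.card_bot] at hk
  omega

theorem triangle235_rels :
    (PresentedGroup.of 0 : PresentedGroup triangle235Rels) ^ 2 = 1 ∧
      (PresentedGroup.of 1 : PresentedGroup triangle235Rels) ^ 3 = 1 ∧
      (PresentedGroup.of 2 : PresentedGroup triangle235Rels) ^ 5 = 1 ∧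
      (PresentedGroup.of 0 * PresentedGroup.of 1 * PresentedGroup.of 2 :
        PresentedGroup triangle235Rels) = 1 :=
  ⟨PresentedGroup.one_of_mem (x := of 0 ^ 2) (by simp [triangle235Rels]),
    PresentedGroup.one_of_mem (x := of 1 ^ 3) (by simp [triangle235Rels]),
    PresentedGroup.one_of_mem (x := of 2 ^ 5) (by simp [triangle235Rels]),
    PresentedGroup.one_of_mem (x := of 0 * of 1 * of 2) (by simp [triangle235Rels])⟩

theorem triangle235_icosahedralRelations :
    IcosahedralRelations (PresentedGroup.of 0 : PresentedGroup triangle235Rels)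
      (PresentedGroup.of 2) :=
  let ⟨ha, hb, hc, habc⟩ := triangle235_rels
  .of_triangle ha hb hc habc

theorem triangle235_closure_eq_top :
    Subgroup.closure {PresentedGroup.of 0, PresentedGroup.of 2} =
      (⊤ : Subgroup (PresentedGroup triangle235Rels)) := by
  rw [eq_top_iff, ← PresentedGroup.closure_range_of, Subgroup.closure_le]
  rintro _ ⟨i, rfl⟩
  fin_cases i
  · exact Subgroup.subset_closure (by simp)
  · show PresentedGroup.of 1 ∈ _
    rw [← inv_inv (PresentedGroup.of 1), ← mul_eq_inv_of_mul_mul_eq_one triangle235_rels.2.2.2]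
    exact inv_mem (mul_mem (Subgroup.subset_closure (by simp)) (Subgroup.subset_closure (by simp)))
  · exact Subgroup.subset_closure (by simp)

open Equiv in
def triangle235A5Gen : Fin 3 → alternatingGroup (Fin 5) :=
  let α : alternatingGroup (Fin 5) := ⟨swap 0 1 * swap 2 3, Perm.mem_alternatingGroup.2 (by decide)⟩
  let β : alternatingGroup (Fin 5) := ⟨swap 1 2 * swap 2 4, Perm.mem_alternatingGroup.2 (by decide)⟩
  ![α, β, (α * β)⁻¹]

theorem triangle235A5Gen_pow :
    triangle235A5Gen 0 ^ 2 = 1 ∧ triangle235A5Gen 1 ^ 3 = 1 ∧ triangle235A5Gen 2 ^ 5 = 1 := by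
  decide

theorem triangle235A5Gen_mul :
    triangle235A5Gen 0 * triangle235A5Gen 1 * triangle235A5Gen 2 = 1 := by
  decide

theorem triangle235A5Gen_ne_one (i : Fin 3) : triangle235A5Gen i ≠ 1 := by
  decide +revert

def triangle235ToA5 : PresentedGroup triangle235Rels →* alternatingGroup (Fin 5) :=
  PresentedGroup.toGroup (f := triangle235A5Gen) <| by
    obtain ⟨h0, h1, h2⟩ := triangle235A5Gen_pow
    simp only [triangle235Rels, Set.mem_insert_iff, Set.mem_singleton_iff]
    rintro r (rfl | rfl | rfl | rfl) <;> simp only [map_pow, _root_.map_mul, lift_apply_of]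
    exacts [h0, h1, h2, triangle235A5Gen_mul]

theorem triangle235ToA5_surjective : Function.Surjective triangle235ToA5 := by
  rw [← MonoidHom.range_eq_top]
  apply alternatingGroup.eq_top_of_thirty_dvd_natCard
  have hdvd (i : Fin 3) : orderOf (triangle235A5Gen i) ∣ Nat.card triangle235ToA5.range :=
    Subgroup.orderOf_dvd_natCard _ ⟨PresentedGroup.of i, PresentedGroup.toGroup.of _⟩
  have : Fact (Nat.Prime 5) := ⟨by norm_num⟩
  obtain ⟨h0, h1, h2⟩ := triangle235A5Gen_pow
  have hdvd2 := orderOf_eq_prime h0 (triangle235A5Gen_ne_one 0) ▸ hdvd 0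
  have hdvd3 := orderOf_eq_prime h1 (triangle235A5Gen_ne_one 1) ▸ hdvd 1
  have hdvd5 := orderOf_eq_prime h2 (triangle235A5Gen_ne_one 2) ▸ hdvd 2
  exact Nat.Coprime.mul_dvd_of_dvd_of_dvd (by norm_num)
    (Nat.Coprime.mul_dvd_of_dvd_of_dvd (by norm_num) hdvd2 hdvd3) hdvd5

/-- The (2,3,5) triangle group `⟨a,b,c | a² = b³ = c⁵ = abc = 1⟩` is isomorphic to
the alternating group `A₅`. -/
theorem triangle235_iso_a5 :
    Nonempty (PresentedGroup triangle235Rels ≃* alternatingGroup (Fin 5)) := by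
  have h := triangle235_icosahedralRelations
  have := h.finite triangle235_closure_eq_top
  refine ⟨MulEquiv.ofBijective triangle235ToA5
    (triangle235ToA5_surjective.bijective_of_nat_card_le ?_)⟩
  rw [alternatingGroup.nat_card_five]
  exact h.card_le_sixty triangle235_closure_eq_top
end

section
/- Let r₁, ..., rₙ be linear endomorphisms of Kⁿ given by rᵢ = 1 + eᵢ ⊗ αᵢ, where (e₁,...,eₙ) is the standard basis and αᵢ are linear functionals. Then the matrix of the product rₙ ⋯ r₂ r₁ in the basis (eᵢ) lies in the big cell, i.e. it factors as u₋⁻¹ h u₊ with u₋ lower unitriangular, u₊ upper unitriangular, and h diagonal invertible; moreover the matrix with (i,j) entry αᵢ(eⱼ) equals h u₊ − u₋. -/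
/-!
Let `A = (αᵢ(eⱼ))` and let `Mᵢ` be the matrix of `rᵢ`: the identity with row `i` replaced by
`eᵢ + Aᵢ`. Row `i` of `P = M_{n-1} ⋯ M_0` is created by `Mᵢ` and untouched afterwards, and when
`Mᵢ` acts, the rows `m ≥ i` of the partial product are still `eₘ` while the rows `m < i` are
already final. Hence `Pᵢ = eᵢ + ∑_{m ≥ i} aᵢₘ eₘ + ∑_{m < i} aᵢₘ Pₘ`, i.e.
`(1 - A_<) P = 1 + A_≥`. As `det Mᵢ = 1 + aᵢᵢ ≠ 0`, the choice `h = diag (1 + aᵢᵢ)`,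
`u₋ = 1 - A_<`, `u₊ = h⁻¹ (1 + A_≥)` gives `P = u₋⁻¹ h u₊` and `h u₊ - u₋ = A_≥ + A_< = A`.
-/

open Matrix

namespace Matrix

section CommRing

variable {R : Type*} [CommRing R] {n : ℕ} (A : Matrix (Fin n) (Fin n) R)

def upperPart : Matrix (Fin n) (Fin n) R := of fun i j => if i ≤ j then A i j else 0

def strictLowerPart : Matrix (Fin n) (Fin n) R := of fun i j => if j < i then A i j else 0

theorem upperPart_add_strictLowerPart : upperPart A + strictLowerPart A = A := by
  ext i j
  by_cases h : i ≤ j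
  · simp [upperPart, strictLowerPart, h, not_lt.2 h]
  · simp [upperPart, strictLowerPart, h, not_le.1 h]

theorem strictLowerPart_mul_row (P : Matrix (Fin n) (Fin n) R) (i : Fin n) :
    (strictLowerPart A * P) i = ∑ m ∈ Finset.Iio i, A i m • P m := by
  rw [mul_apply_eq_vecMul, vecMul_eq_sum, ← Finset.filter_gt_eq_Iio, Finset.sum_filter]
  simp [strictLowerPart, ite_smul]

theorem one_sub_strictLowerPart_apply_self (i : Fin n) : (1 - strictLowerPart A) i i = 1 := by
  simp [strictLowerPart]

theorem one_sub_strictLowerPart_apply_of_lt {i j : Fin n} (hij : i < j) :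
    (1 - strictLowerPart A) i j = 0 := by
  simp [strictLowerPart, hij.ne, not_lt.2 hij.le]

theorem det_one_sub_strictLowerPart : (1 - strictLowerPart A).det = 1 := by
  rw [det_of_isLowerTriangular _ fun i j (hij : i < j) => one_sub_strictLowerPart_apply_of_lt A hij]
  exact Finset.prod_eq_one fun i _ => one_sub_strictLowerPart_apply_self A i

def rowReflection (i : Fin n) : Matrix (Fin n) (Fin n) R := 1 + vecMulVec (Pi.single i 1) (A i)

theorem det_rowReflection (i : Fin n) : (rowReflection A i).det = 1 + A i i := by
  rw [rowReflection, vecMulVec_eq Unit, det_one_add_replicateCol_mul_replicateRow]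
  simp

theorem rowReflection_mul_row_of_ne (P : Matrix (Fin n) (Fin n) R) {i m : Fin n} (h : m ≠ i) :
    (rowReflection A i * P) m = P m := by
  ext j
  simp [rowReflection, add_mul, vecMulVec_mul, vecMulVec_apply, h]

theorem rowReflection_mul_row_self (P : Matrix (Fin n) (Fin n) R) (i : Fin n) :
    (rowReflection A i * P) i = P i + A i ᵥ* P := by
  ext j
  simp [rowReflection, add_mul, vecMulVec_mul, vecMulVec_apply]

def coxeterProd : Matrix (Fin n) (Fin n) R := (List.ofFn (rowReflection A)).reverse.prod

def coxeterPartialProd (k : ℕ) : Matrix (Fin n) (Fin n) R :=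
  ((List.ofFn (rowReflection A)).take k).reverse.prod

theorem coxeterPartialProd_zero : coxeterPartialProd A 0 = 1 := by
  simp [coxeterPartialProd]

theorem coxeterPartialProd_succ {k : ℕ} (hk : k < n) :
    coxeterPartialProd A (k + 1) = rowReflection A ⟨k, hk⟩ * coxeterPartialProd A k := by
  simp [coxeterPartialProd, List.take_add_one, hk]

theorem coxeterPartialProd_card : coxeterPartialProd A n = coxeterProd A := by
  rw [coxeterPartialProd, coxeterProd, List.take_of_length_le (by simp)]

theorem coxeterPartialProd_row_of_le {k : ℕ} {m : Fin n} (hkm : k ≤ m) :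
    coxeterPartialProd A k m = (1 : Matrix (Fin n) (Fin n) R) m := by
  induction k with
  | zero => rw [coxeterPartialProd_zero]
  | succ k ih =>
    rw [coxeterPartialProd_succ A (by omega),
      rowReflection_mul_row_of_ne A _ (Fin.ne_of_val_ne (by simp; omega)), ih (by omega)]

theorem coxeterPartialProd_row_eq_of_lt {k l : ℕ} {m : Fin n} (hmk : m < k) (hkl : k ≤ l)
    (hln : l ≤ n) : coxeterPartialProd A l m = coxeterPartialProd A k m := by
  induction l, hkl using Nat.le_induction with
  | base => rfl
  | succ l hkl ih =>
    rw [coxeterPartialProd_succ A (by omega),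
      rowReflection_mul_row_of_ne A _ (Fin.ne_of_val_ne (by simp; omega)), ih (by omega)]

theorem coxeterProd_row (i : Fin n) :
    coxeterProd A i = (1 + upperPart A) i + ∑ m ∈ Finset.Iio i, A i m • coxeterProd A m := by
  simp only [← coxeterPartialProd_card]
  have h_split : A i ᵥ* coxeterPartialProd A i =
      ∑ m ∈ Finset.Ici i, A i m • coxeterPartialProd A i m +
        ∑ m ∈ Finset.Iio i, A i m • coxeterPartialProd A i m := by
    rw [vecMul_eq_sum, ← Finset.sum_filter_add_sum_filter_not _ (i ≤ ·), Finset.filter_le_eq_Ici]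
    simp_rw [not_le, Finset.filter_gt_eq_Iio]
  have h_upper : ∑ m ∈ Finset.Ici i, A i m • coxeterPartialProd A i m = upperPart A i := by
    rw [Finset.sum_congr rfl fun m hm => by
      rw [coxeterPartialProd_row_of_le A (Fin.le_iff_val_le_val.1 (Finset.mem_Ici.1 hm))]]
    ext j
    simp [Finset.sum_apply, one_apply, upperPart]
  have h_lower : ∑ m ∈ Finset.Iio i, A i m • coxeterPartialProd A i m =
      ∑ m ∈ Finset.Iio i, A i m • coxeterPartialProd A n m := by
    refine Finset.sum_congr rfl fun m hm => ?_
    rw [coxeterPartialProd_row_eq_of_lt A (Fin.lt_def.1 (Finset.mem_Iio.1 hm)) i.isLt.le le_rfl]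
  calc coxeterPartialProd A n i = coxeterPartialProd A (i + 1) i :=
        coxeterPartialProd_row_eq_of_lt A (by simp) i.isLt le_rfl
    _ = coxeterPartialProd A i i + A i ᵥ* coxeterPartialProd A i := by
      rw [coxeterPartialProd_succ A i.isLt, rowReflection_mul_row_self]
    _ = _ := by
      rw [h_split, h_upper, h_lower, coxeterPartialProd_row_of_le A le_rfl, ← add_assoc]
      rfl

theorem one_sub_strictLowerPart_mul_coxeterProd :
    (1 - strictLowerPart A) * coxeterProd A = 1 + upperPart A := by
  funext i
  rw [sub_mul, one_mul]
  change coxeterProd A i - (strictLowerPart A * coxeterProd A) i = _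
  rw [strictLowerPart_mul_row, coxeterProd_row, add_sub_cancel_right]

end CommRing

section Field

variable {K : Type*} [Field K] {n : ℕ} (A : Matrix (Fin n) (Fin n) K)

def normalizedUpperPart : Matrix (Fin n) (Fin n) K :=
  diagonal (fun i => (1 + A i i)⁻¹) * (1 + upperPart A)

theorem normalizedUpperPart_apply_self {i : Fin n} (hd : 1 + A i i ≠ 0) :
    normalizedUpperPart A i i = 1 := by
  simp [normalizedUpperPart, diagonal_mul, upperPart, hd]

theorem normalizedUpperPart_apply_of_lt {i j : Fin n} (hji : j < i) :
    normalizedUpperPart A i j = 0 := by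
  simp [normalizedUpperPart, diagonal_mul, upperPart, hji.ne', not_le.2 hji]

theorem diagonal_mul_normalizedUpperPart (hd : ∀ i, 1 + A i i ≠ 0) :
    diagonal (fun i => 1 + A i i) * normalizedUpperPart A = 1 + upperPart A := by
  rw [normalizedUpperPart, ← Matrix.mul_assoc, diagonal_mul_diagonal]
  simp [mul_inv_cancel₀ (hd _)]

end Field

end Matrix

theorem LinearMap.toMatrix'_smulRight {R : Type*} [CommSemiring R] {m n : Type*} [Fintype n]
    [DecidableEq n] (f : (n → R) →ₗ[R] R) (x : m → R) :
    LinearMap.toMatrix' (f.smulRight x) = vecMulVec x fun j => f (Pi.single j 1) := by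
  ext i j
  simp [vecMulVec_apply, mul_comm]

theorem killing_coxeter_general {K : Type*} [Field K] (n : ℕ)
    (α : Fin n → ((Fin n → K) →ₗ[K] K)) (r : Fin n → Module.End K (Fin n → K))
    (hr : ∀ i, r i = 1 + (α i).smulRight (Pi.single i 1))
    (hinv : ∀ i, IsUnit (r i)) :
    ∃ (uLow uUp h : Matrix (Fin n) (Fin n) K),
      (∀ i, uLow i i = 1) ∧ (∀ i j, i < j → uLow i j = 0) ∧
      (∀ i, uUp i i = 1) ∧ (∀ i j, j < i → uUp i j = 0) ∧
      (∃ d : Fin n → K, (∀ i, d i ≠ 0) ∧ h = Matrix.diagonal d) ∧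
      LinearMap.toMatrix' ((List.ofFn r).reverse.prod : Module.End K (Fin n → K)) =
        uLow⁻¹ * h * uUp ∧
      Matrix.of (fun i j => α i (Pi.single j 1)) = h * uUp - uLow := by
  set A : Matrix (Fin n) (Fin n) K := Matrix.of fun i j => α i (Pi.single j 1)
  have hM : ∀ i, LinearMap.toMatrix' (r i) = rowReflection A i := fun i => by
    rw [hr, map_add, LinearMap.toMatrix'_one, LinearMap.toMatrix'_smulRight]
    rfl
  have hd : ∀ i, 1 + A i i ≠ 0 := fun i => by
    rw [← det_rowReflection, ← hM, LinearMap.det_toMatrix']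
    exact ((LinearMap.isUnit_iff_isUnit_det _).1 (hinv i)).ne_zero
  have hP : LinearMap.toMatrix' (List.ofFn r).reverse.prod = coxeterProd A := by
    change LinearMap.toMatrixAlgEquiv' _ = _
    rw [map_list_prod, List.map_reverse, List.map_ofFn]
    exact congr_arg (List.prod ∘ List.reverse ∘ List.ofFn) (funext hM)
  refine ⟨1 - strictLowerPart A, normalizedUpperPart A, diagonal fun i => 1 + A i i,
    one_sub_strictLowerPart_apply_self A, fun i j => one_sub_strictLowerPart_apply_of_lt A,
    fun i => normalizedUpperPart_apply_self A (hd i), fun i j => normalizedUpperPart_apply_of_lt A,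
    ⟨_, hd, rfl⟩, ?_, ?_⟩
  · have hLow : IsUnit (1 - strictLowerPart A).det := by
      rw [det_one_sub_strictLowerPart]
      exact isUnit_one
    rw [Matrix.mul_assoc, diagonal_mul_normalizedUpperPart A hd,
      ← one_sub_strictLowerPart_mul_coxeterProd, nonsing_inv_mul_cancel_left _ _ hLow, hP]
  · rw [diagonal_mul_normalizedUpperPart A hd, add_sub_sub_cancel, upperPart_add_strictLowerPart]

/-- Killing–Coxeter identity / Gauss factorization: the matrix (in the standard basis) of a
product `rₙ ⋯ r₂ r₁` of complex reflections `rᵢ = 1 + eᵢ ⊗ αᵢ` lies in the big cell, i.e.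
factors as `uLow⁻¹ h uUp` with `uLow` lower unitriangular, `uUp` upper unitriangular and `h`
invertible diagonal; moreover the matrix `(αᵢ(eⱼ))` equals `h uUp − uLow`. -/
theorem killing_coxeter {K : Type*} [Field K] (n : ℕ) (hn : 1 ≤ n)
    (α : Fin n → ((Fin n → K) →ₗ[K] K)) (r : Fin n → Module.End K (Fin n → K))
    (hr : ∀ i, r i = 1 + (α i).smulRight (Pi.single i 1))
    (hinv : ∀ i, IsUnit (r i)) :
    ∃ (uLow uUp h : Matrix (Fin n) (Fin n) K),
      (∀ i, uLow i i = 1) ∧ (∀ i j, i < j → uLow i j = 0) ∧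
      (∀ i, uUp i i = 1) ∧ (∀ i j, j < i → uUp i j = 0) ∧
      (∃ d : Fin n → K, (∀ i, d i ≠ 0) ∧ h = Matrix.diagonal d) ∧
      LinearMap.toMatrix' ((List.ofFn r).reverse.prod : Module.End K (Fin n → K)) =
        uLow⁻¹ * h * uUp ∧
      Matrix.of (fun i j => α i (Pi.single j 1)) = h * uUp - uLow :=
  killing_coxeter_general n α r hr hinv
end

section
/- For the degree-3 tetrahedral Painlevé VI solution given parametrically by y = (s−1)(s+2)/(s(s+1)) and t = (s−1)²(s+2)/((s+1)²(s−2)), the function y(t) satisfies the Painlevé VI equation with parameters α = (θ₄−1)²/2, β = −θ₁²/2, γ = θ₃²/2, δ = (1−θ₂²)/2 where (θ₁,θ₂,θ₃,θ₄) = (2/3, 1/3, 1/3, 2/3). -/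
/-- The Painlevé VI equation, as a relation between `t`, `y = y(t)`, `yp = y'(t)` and
`ypp = y''(t)`, with parameters `α β γ δ`. -/
def PVI (α β γ δ t y yp ypp : ℝ) : Prop :=
  ypp = (1/2) * (1/y + 1/(y-1) + 1/(y-t)) * yp^2
        - (1/t + 1/(t-1) + 1/(y-t)) * yp
        + (y*(y-1)*(y-t) / (t^2*(t-1)^2)) *
            (α + β*t/y^2 + γ*(t-1)/(y-1)^2 + δ*t*(t-1)/(y-t)^2)

/-!
By the chain rule `y' = ẏ/ṫ` and `y'' = (d/ds)(ẏ/ṫ) / ṫ`, where the dot is `d/ds`.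
Both `ẏ/ṫ` and its `s`-derivative are explicit rational functions of `s`, so after substituting
them the Painlevé VI equation becomes an identity between rational functions of `s`, checked by
clearing denominators.
-/

open Filter Topology

noncomputable def tetrahedralY (s : ℝ) : ℝ := (s-1)*(s+2) / (s*(s+1))

noncomputable def tetrahedralT (s : ℝ) : ℝ := (s-1)^2*(s+2) / ((s+1)^2*(s-2))

/-- `y' = ẏ/ṫ` as a rational function of the parameter `s`. -/
noncomputable def tetrahedralSlope (s : ℝ) : ℝ := -((2*s+1)*(s+1)*(s-2)^2) / (6*s^2*(s-1))

section Derivatives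

variable {x : ℝ}

theorem hasDerivAt_tetrahedralY (hx : x ≠ 0) (hx1 : x + 1 ≠ 0) :
    HasDerivAt tetrahedralY (2*(2*x+1) / (x^2*(x+1)^2)) x := by
  have hid : HasDerivAt (fun x : ℝ => x) 1 x := hasDerivAt_id' x
  have hnum : HasDerivAt (fun x => (x-1)*(x+2)) _ x := (hid.sub_const 1).fun_mul (hid.add_const 2)
  have hden : HasDerivAt (fun x => x*(x+1)) _ x := hid.fun_mul (hid.add_const 1)
  refine (hnum.div hden (mul_ne_zero hx hx1)).congr_deriv ?_
  field_simp
  ring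

theorem hasDerivAt_tetrahedralT (hx1 : x + 1 ≠ 0) (hx2 : x - 2 ≠ 0) :
    HasDerivAt tetrahedralT (-12*(x-1) / ((x+1)^3*(x-2)^2)) x := by
  have hid : HasDerivAt (fun x : ℝ => x) 1 x := hasDerivAt_id' x
  have hnum : HasDerivAt (fun x => (x-1)^2*(x+2)) _ x :=
    ((hid.sub_const 1).fun_pow 2).fun_mul (hid.add_const 2)
  have hden : HasDerivAt (fun x => (x+1)^2*(x-2)) _ x :=
    ((hid.add_const 1).fun_pow 2).fun_mul (hid.sub_const 2)
  refine (hnum.div hden (mul_ne_zero (pow_ne_zero 2 hx1) hx2)).congr_deriv ?_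
  field_simp
  ring

theorem hasDerivAt_tetrahedralSlope (hx : x ≠ 0) (hx1 : x - 1 ≠ 0) :
    HasDerivAt tetrahedralSlope (-(x-2)*(x^4+4*x^2-2) / (3*x^3*(x-1)^2)) x := by
  have hid : HasDerivAt (fun x : ℝ => x) 1 x := hasDerivAt_id' x
  have hnum : HasDerivAt (fun x => -((2*x+1)*(x+1)*(x-2)^2)) _ x :=
    ((((hid.const_mul 2).add_const 1).fun_mul (hid.add_const 1)).fun_mul
      ((hid.sub_const 2).fun_pow 2)).neg
  have hden : HasDerivAt (fun x => 6*x^2*(x-1)) _ x :=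
    ((hid.fun_pow 2).const_mul 6).fun_mul (hid.sub_const 1)
  refine (hnum.div hden (by simp [hx, hx1])).congr_deriv ?_
  field_simp
  ring

end Derivatives

theorem tetrahedralSlope_eventuallyEq {s : ℝ} (hs0 : s ≠ 0) (hs1 : s ≠ -1) (hs2 : s ≠ 2)
    (hsm1 : s ≠ 1) :
    (fun x => deriv tetrahedralY x / deriv tetrahedralT x) =ᶠ[𝓝 s] tetrahedralSlope := by
  filter_upwards [eventually_ne_nhds hs0, eventually_ne_nhds hs1, eventually_ne_nhds hs2,
    eventually_ne_nhds hsm1] with x hx0 hx1 hx2 hxm1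
  have hx1' : x + 1 ≠ 0 := fun h => hx1 (by linarith)
  rw [(hasDerivAt_tetrahedralY hx0 hx1').deriv,
    (hasDerivAt_tetrahedralT hx1' (sub_ne_zero.mpr hx2)).deriv, tetrahedralSlope]
  have hxm1' : x - 1 ≠ 0 := sub_ne_zero.mpr hxm1
  field_simp
  ring

theorem tetrahedralY_sub_one {s : ℝ} (hs0 : s ≠ 0) (hs1 : s + 1 ≠ 0) :
    tetrahedralY s - 1 = -2 / (s*(s+1)) := by
  unfold tetrahedralY
  field_simp
  ring

theorem tetrahedralT_sub_one {s : ℝ} (hs1 : s + 1 ≠ 0) (hs2 : s - 2 ≠ 0) :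
    tetrahedralT s - 1 = 4 / ((s+1)^2*(s-2)) := by
  unfold tetrahedralT
  field_simp
  ring

theorem tetrahedralY_sub_tetrahedralT {s : ℝ} (hs0 : s ≠ 0) (hs1 : s + 1 ≠ 0)
    (hs2 : s - 2 ≠ 0) :
    tetrahedralY s - tetrahedralT s = -2*(s-1)*(s+2) / (s*(s+1)^2*(s-2)) := by
  unfold tetrahedralY tetrahedralT
  field_simp
  ring

theorem PVI_tetrahedralT_tetrahedralY {s : ℝ} (hs0 : s ≠ 0) (hs1 : s + 1 ≠ 0)
    (hs2 : s - 2 ≠ 0) (hsm1 : s - 1 ≠ 0) (hsp2 : s + 2 ≠ 0) :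
    PVI ((2/3 - 1)^2/2) (-(2/3)^2/2) ((1/3)^2/2) ((1 - (1/3)^2)/2)
      (tetrahedralT s) (tetrahedralY s) (tetrahedralSlope s)
      ((-(s-2)*(s^4+4*s^2-2) / (3*s^3*(s-1)^2)) / (-12*(s-1) / ((s+1)^3*(s-2)^2))) := by
  unfold PVI
  -- the factorisations show `field_simp` that `y - 1`, `t - 1` and `y - t` are nonzero
  rw [tetrahedralY_sub_one hs0 hs1, tetrahedralT_sub_one hs1 hs2,
    tetrahedralY_sub_tetrahedralT hs0 hs1 hs2, tetrahedralY, tetrahedralT, tetrahedralSlope]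
  field_simp
  ring

/-- The degree-3 tetrahedral algebraic Painlevé VI solution:
`y = (s−1)(s+2)/(s(s+1))`, `t = (s−1)²(s+2)/((s+1)²(s−2))` satisfies Painlevé VI with
`θ = (2/3, 1/3, 1/3, 2/3)`, i.e. `α = 1/18`, `β = −2/9`, `γ = 1/18`, `δ = 4/9`,
where `y' = (dy/ds)/(dt/ds)` etc. -/
theorem tetrahedral_degree3_solves_PVI :
    ∀ s : ℝ,
      let Y : ℝ → ℝ := fun s => (s-1)*(s+2) / (s*(s+1))
      let T : ℝ → ℝ := fun s => (s-1)^2*(s+2) / ((s+1)^2*(s-2))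
      s ≠ 0 → s ≠ -1 → s ≠ 2 → deriv T s ≠ 0 →
      T s ≠ 0 → T s ≠ 1 → Y s ≠ 0 → Y s ≠ 1 → Y s ≠ T s →
      PVI ((2/3 - 1)^2/2) (-(2/3)^2/2) ((1/3)^2/2) ((1 - (1/3)^2)/2)
        (T s) (Y s) (deriv Y s / deriv T s)
        (deriv (fun x => deriv Y x / deriv T x) s / deriv T s) := by
  intro s Y T hs0 hs1 hs2 _ hT0 _ _ _ _
  change tetrahedralT s ≠ 0 at hT0
  change PVI _ _ _ _ (tetrahedralT s) (tetrahedralY s)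
    (deriv tetrahedralY s / deriv tetrahedralT s)
    (deriv (fun x => deriv tetrahedralY x / deriv tetrahedralT x) s / deriv tetrahedralT s)
  have hs1' : s + 1 ≠ 0 := fun h => hs1 (by linarith)
  have hs2' : s - 2 ≠ 0 := sub_ne_zero.mpr hs2
  obtain ⟨hsm1, hsp2⟩ : s - 1 ≠ 0 ∧ s + 2 ≠ 0 := by
    simpa [tetrahedralT, hs1', hs2'] using hT0
  have hslope := tetrahedralSlope_eventuallyEq hs0 hs1 hs2 (sub_ne_zero.mp hsm1)
  rw [hslope.eq_of_nhds, hslope.deriv_eq, (hasDerivAt_tetrahedralSlope hs0 hsm1).deriv,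
    (hasDerivAt_tetrahedralT hs1' hs2').deriv]
  exact PVI_tetrahedralT_tetrahedralY hs0 hs1' hs2' hsm1 hsp2
end

section
/- For the degree-4 octahedral Painlevé VI solution given parametrically by y = (s−1)²/(s(s−2)) and t = (s+1)(s−1)³/(s³(s−2)), the function y(t) satisfies the Painlevé VI equation with parameters corresponding to θ = (1/4, 1/4, 1/4, 1/4), i.e. α = 9/32, β = −1/32, γ = 1/32, δ = 15/32. -/
/-!
Both `y` and `t` are rational in `s`, with `dy/ds = -2(s-1)/(s²(s-2)²)` and
`dt/ds = -6(s-1)²/(s⁴(s-2)²)`. Hence `dy/dt = s²/(3(s-1))` on a neighbourhood of `s`, and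
`d²y/dt² = (d/ds)(s²/(3(s-1))) / (dt/ds) = s(s-2)/(3(s-1)²) / (dt/ds)`. With
`y - 1 = 1/(s(s-2))`, `t - 1 = (2s-1)/(s³(s-2))` and `y - t = (s-1)²/(s³(s-2))`, Painlevé VI
becomes an identity between rational functions of `s`, valid away from the poles
`s ∈ {0, 1, 2, -1, 1/2}` of its coefficients.
-/

namespace OctahedralPVI

noncomputable def y (s : ℝ) : ℝ := (s-1)^2 / (s*(s-2))

noncomputable def t (s : ℝ) : ℝ := (s+1)*(s-1)^3 / (s^3*(s-2))

variable {s : ℝ}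

theorem hasDerivAt_y (h0 : s ≠ 0) (h2 : s ≠ 2) :
    HasDerivAt y (-2*(s-1) / (s^2*(s-2)^2)) s := by
  have hden : s*(s-2) ≠ 0 := mul_ne_zero h0 (sub_ne_zero.mpr h2)
  have := (((hasDerivAt_id' s).sub_const 1).fun_pow 2).fun_div
    ((hasDerivAt_id' s).fun_mul ((hasDerivAt_id' s).sub_const 2)) hden
  refine this.congr_deriv ?_
  field_simp
  ring

theorem hasDerivAt_t (h0 : s ≠ 0) (h2 : s ≠ 2) :
    HasDerivAt t (-6*(s-1)^2 / (s^4*(s-2)^2)) s := by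
  have hden : s^3*(s-2) ≠ 0 := mul_ne_zero (pow_ne_zero 3 h0) (sub_ne_zero.mpr h2)
  have := (((hasDerivAt_id' s).add_const 1).fun_mul
    (((hasDerivAt_id' s).sub_const 1).fun_pow 3)).fun_div
    (((hasDerivAt_id' s).fun_pow 3).fun_mul ((hasDerivAt_id' s).sub_const 2)) hden
  refine this.congr_deriv ?_
  field_simp
  ring

/-- At `s = 1` both sides are `0`, because of the junk value `x / 0 = 0`. -/
theorem deriv_y_div_deriv_t (h0 : s ≠ 0) (h2 : s ≠ 2) :
    deriv y s / deriv t s = s^2 / (3*(s-1)) := by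
  rw [(hasDerivAt_y h0 h2).deriv, (hasDerivAt_t h0 h2).deriv]
  rcases eq_or_ne s 1 with rfl | h1
  · norm_num
  · have : s - 1 ≠ 0 := sub_ne_zero.mpr h1
    field_simp
    ring

theorem deriv_deriv_y_div_deriv_t (h0 : s ≠ 0) (h1 : s ≠ 1) (h2 : s ≠ 2) :
    deriv (fun x => deriv y x / deriv t x) s = s*(s-2) / (3*(s-1)^2) := by
  have hslope : (fun x => deriv y x / deriv t x) =ᶠ[nhds s] fun x => x^2 / (3*(x-1)) := by
    filter_upwards [eventually_ne_nhds h0, eventually_ne_nhds h2] with x hx0 hx2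
    exact deriv_y_div_deriv_t hx0 hx2
  have hden : 3*(s-1) ≠ 0 := mul_ne_zero three_ne_zero (sub_ne_zero.mpr h1)
  have := ((hasDerivAt_id' s).fun_pow 2).fun_div
    (((hasDerivAt_id' s).sub_const 1).const_mul 3) hden
  rw [hslope.deriv_eq, this.deriv]
  field_simp
  ring

theorem pvi_explicit (h0 : s ≠ 0) (h1 : s ≠ 1) (h2 : s ≠ 2) (hm1 : s ≠ -1)
    (hhalf : s ≠ 1/2) :
    PVI (9/32) (-1/32) (1/32) (15/32) (t s) (y s) (s^2 / (3*(s-1)))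
      (s*(s-2) / (3*(s-1)^2) / (-6*(s-1)^2 / (s^4*(s-2)^2))) := by
  have hs1 : s - 1 ≠ 0 := sub_ne_zero.mpr h1
  have hs2 : s - 2 ≠ 0 := sub_ne_zero.mpr h2
  have hsp1 : s + 1 ≠ 0 := fun h => hm1 (eq_neg_of_add_eq_zero_left h)
  have hs2m1 : s*2 - 1 ≠ 0 := fun h => hhalf (by linarith)
  have hy1 : y s - 1 = 1 / (s*(s-2)) := by unfold y; field_simp; ring
  have ht1 : t s - 1 = (2*s-1) / (s^3*(s-2)) := by unfold t; field_simp; ring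
  have hyt : y s - t s = (s-1)^2 / (s^3*(s-2)) := by unfold y t; field_simp; ring
  rw [PVI, hy1, ht1, hyt, y, t]
  field_simp
  ring

end OctahedralPVI

open OctahedralPVI in
/-- The degree-4 octahedral algebraic Painlevé VI solution:
`y = (s−1)²/(s(s−2))`, `t = (s+1)(s−1)³/(s³(s−2))` satisfies Painlevé VI with
`θ = (1/4,1/4,1/4,1/4)`, i.e. `α = 9/32`, `β = −1/32`, `γ = 1/32`, `δ = 15/32`,
where `y' = (dy/ds)/(dt/ds)` etc. -/
theorem octahedral_degree4_solves_PVI :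
    ∀ s : ℝ,
      let Y : ℝ → ℝ := fun s => (s-1)^2 / (s*(s-2))
      let T : ℝ → ℝ := fun s => (s+1)*(s-1)^3 / (s^3*(s-2))
      s ≠ 0 → s ≠ 2 → deriv T s ≠ 0 →
      T s ≠ 0 → T s ≠ 1 → Y s ≠ 0 → Y s ≠ 1 → Y s ≠ T s →
      PVI (9/32) (-1/32) (1/32) (15/32)
        (T s) (Y s) (deriv Y s / deriv T s)
        (deriv (fun x => deriv Y x / deriv T x) s / deriv T s) := by
  intro s _ _ h0 h2 hT' hT0 hT1 _ _ _
  change deriv t s ≠ 0 at hT'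
  change t s ≠ 0 at hT0
  change t s ≠ 1 at hT1
  have h1 : s ≠ 1 := by
    rintro rfl
    exact hT' (by simpa using (hasDerivAt_t h0 h2).deriv)
  have hm1 : s ≠ -1 := by
    rintro rfl
    exact hT0 (by norm_num [t])
  have hhalf : s ≠ 1/2 := by
    rintro rfl
    exact hT1 (by norm_num [t])
  change PVI _ _ _ _ (t s) (y s) (deriv y s / deriv t s)
    (deriv (fun x => deriv y x / deriv t x) s / deriv t s)
  rw [deriv_y_div_deriv_t h0 h2, deriv_deriv_y_div_deriv_t h0 h1 h2, (hasDerivAt_t h0 h2).deriv]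
  exact pvi_explicit h0 h1 h2 hm1 hhalf
end
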